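/- The function f(m) := 2E(m)/(m·K(m)) + 1 − 2/m is a strictly decreasing bijection from (0,1) onto (−1, 0); in particular f(m) → 0 as m → 0⁺ and f(m) → −1 as m → 1⁻. -/

import Mathlib

/-!
With Legendre's associated integrals `D = ∫ sin²θ / √(1 - m sin²θ)` and
`B = ∫ cos²θ / √(1 - m sin²θ)` one has `K = D + B` and `E = K - m D`, hence
`f = 1 - 2 D / K = -1 + 2 B / K`. The quotient `D / K` is the mean of `sin²θ` for the weight
`(1 - m sin²θ)^(-1/2)`, and raising `m` multiplies this weight by a factor increasing in `sin²θ`;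
a Chebyshev-type argument shows the mean strictly increases, so `f` strictly decreases. At `m = 0`
the mean is `1/2`, so `f → 0`; as `m → 1⁻`, `B ≤ 1` while `K ≥ log (1 + π / (2√(1 - m))) → ∞`,
so `f → -1`. Continuity of `D / K` up to `m = 0` and the intermediate value theorem give
surjectivity.
-/

open Real Filter

noncomputable def ellK (m : ℝ) : ℝ :=
  ∫ θ in (0:ℝ)..(π / 2), 1 / Real.sqrt (1 - m * Real.sin θ ^ 2)

noncomputable def ellE (m : ℝ) : ℝ :=
  ∫ θ in (0:ℝ)..(π / 2), Real.sqrt (1 - m * Real.sin θ ^ 2)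

open Set intervalIntegral MeasureTheory Topology

noncomputable def ellD (m : ℝ) : ℝ :=
  ∫ θ in (0:ℝ)..(π / 2), sin θ ^ 2 / √(1 - m * sin θ ^ 2)

noncomputable def ellB (m : ℝ) : ℝ :=
  ∫ θ in (0:ℝ)..(π / 2), cos θ ^ 2 / √(1 - m * sin θ ^ 2)

section
variable {m : ℝ}

lemma one_sub_mul_pos {x : ℝ} (hm : m < 1) (hx₀ : 0 ≤ x) (hx₁ : x ≤ 1) : 0 < 1 - m * x := by
  rcases le_or_gt 0 m with h | h <;> nlinarith

lemma one_sub_mul_sin_sq_pos (hm : m < 1) (θ : ℝ) : 0 < 1 - m * sin θ ^ 2 :=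
  one_sub_mul_pos hm (sq_nonneg _) (sin_sq_le_one θ)

lemma continuous_div_sqrt_one_sub_mul_sin_sq (hm : m < 1) {w : ℝ → ℝ} (hw : Continuous w) :
    Continuous fun θ => w θ / √(1 - m * sin θ ^ 2) :=
  hw.div (by fun_prop) fun θ => (sqrt_pos.2 (one_sub_mul_sin_sq_pos hm θ)).ne'

lemma intervalIntegrable_div_sqrt_one_sub_mul_sin_sq (hm : m < 1) {w : ℝ → ℝ}
    (hw : Continuous w) (a b : ℝ) :
    IntervalIntegrable (fun θ => w θ / √(1 - m * sin θ ^ 2)) volume a b :=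
  (continuous_div_sqrt_one_sub_mul_sin_sq hm hw).intervalIntegrable a b

lemma continuousOn_integral_div_sqrt_one_sub_mul_sin_sq {w : ℝ → ℝ} (hw : Continuous w) (a b : ℝ) :
    ContinuousOn (fun m => ∫ θ in a..b, w θ / √(1 - m * sin θ ^ 2)) (Iio 1) := by
  rw [continuousOn_iff_continuous_domRestrict]
  refine continuous_parametric_intervalIntegral_of_continuous' ?_ a b
  exact (hw.comp continuous_snd).div (by fun_prop)
    fun p => (sqrt_pos.2 (one_sub_mul_sin_sq_pos p.1.2 p.2)).ne'

lemma ellK_eq_ellD_add_ellB (hm : m < 1) : ellK m = ellD m + ellB m := by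
  rw [ellD, ellB, ← integral_add
    (intervalIntegrable_div_sqrt_one_sub_mul_sin_sq hm (by fun_prop) _ _)
    (intervalIntegrable_div_sqrt_one_sub_mul_sin_sq hm (by fun_prop) _ _), ellK]
  simp only [← add_div, sin_sq_add_cos_sq]

lemma ellE_eq_ellK_sub_mul_ellD (hm : m < 1) : ellE m = ellK m - m * ellD m := by
  rw [ellD, ← intervalIntegral.integral_const_mul, ellK, ← integral_sub
    (intervalIntegrable_div_sqrt_one_sub_mul_sin_sq hm continuous_const _ _)
    ((intervalIntegrable_div_sqrt_one_sub_mul_sin_sq hm (by fun_prop) _ _).const_mul m), ellE]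
  congr 1 with θ
  rw [mul_div_assoc', div_sub_div_same, div_sqrt]

lemma integral_sub_div_sqrt (hm : m < 1) (c : ℝ) :
    ∫ θ in (0:ℝ)..(π / 2), (sin θ ^ 2 - c) / √(1 - m * sin θ ^ 2) = ellD m - c * ellK m := by
  rw [ellD, ellK, ← intervalIntegral.integral_const_mul, ← integral_sub
    (intervalIntegrable_div_sqrt_one_sub_mul_sin_sq hm (by fun_prop) _ _)
    ((intervalIntegrable_div_sqrt_one_sub_mul_sin_sq hm continuous_const _ _).const_mul c)]
  congr 1 with θ
  ring

lemma ellD_pos (hm : m < 1) : 0 < ellD m :=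
  intervalIntegral_pos_of_pos_on
    (intervalIntegrable_div_sqrt_one_sub_mul_sin_sq hm (by fun_prop) _ _)
    (fun θ hθ => div_pos (pow_pos (sin_pos_of_pos_of_lt_pi hθ.1 (by linarith [hθ.2, pi_pos])) 2)
      (sqrt_pos.2 (one_sub_mul_sin_sq_pos hm θ))) (by positivity)

lemma ellB_pos (hm : m < 1) : 0 < ellB m :=
  intervalIntegral_pos_of_pos_on
    (intervalIntegrable_div_sqrt_one_sub_mul_sin_sq hm (by fun_prop) _ _)
    (fun θ hθ => div_pos (pow_pos (cos_pos_of_mem_Ioo ⟨by linarith [hθ.1, pi_pos], hθ.2⟩) 2)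
      (sqrt_pos.2 (one_sub_mul_sin_sq_pos hm θ))) (by positivity)

lemma ellK_pos (hm : m < 1) : 0 < ellK m := by
  rw [ellK_eq_ellD_add_ellB hm]
  exact add_pos (ellD_pos hm) (ellB_pos hm)

lemma ellB_le_one (hm : m < 1) : ellB m ≤ 1 := by
  calc ellB m ≤ ∫ θ in (0:ℝ)..(π / 2), cos θ :=
        integral_mono_on (by positivity)
          (intervalIntegrable_div_sqrt_one_sub_mul_sin_sq hm (by fun_prop) _ _)
          (continuous_cos.intervalIntegrable _ _) fun θ hθ => ?_
    _ = 1 := by simp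
  have hcos : 0 ≤ cos θ := cos_nonneg_of_mem_Icc ⟨by linarith [hθ.1, pi_pos], hθ.2⟩
  have hA := sqrt_pos.2 (one_sub_mul_sin_sq_pos hm θ)
  have hle : cos θ ≤ √(1 - m * sin θ ^ 2) :=
    le_sqrt_of_sq_le (by nlinarith [sin_sq_add_cos_sq θ, sq_nonneg (sin θ)])
  rw [div_le_iff₀ hA, sq]
  exact mul_le_mul_of_nonneg_left hle hcos

lemma ellD_div_ellK_zero : ellD 0 / ellK 0 = 1 / 2 := by
  simp only [ellD, ellK, zero_mul, sub_zero, sqrt_one, div_one, integral_sin_sq, integral_one,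
    sin_zero, cos_pi_div_two]
  field_simp
  ring

end

section
variable {R : Type*} [Ring R] [LinearOrder R] [IsStrictOrderedRing R] {r : R → R} {s : Set R}
  {x y : R}

lemma MonotoneOn.sub_mul_sub_nonneg (hr : MonotoneOn r s) (hx : x ∈ s) (hy : y ∈ s) :
    0 ≤ (x - y) * (r x - r y) := by
  rcases le_total x y with h | h
  · exact mul_nonneg_of_nonpos_of_nonpos (sub_nonpos.2 h) (sub_nonpos.2 (hr hx hy h))
  · exact mul_nonneg (sub_nonneg.2 h) (sub_nonneg.2 (hr hy hx h))

lemma StrictMonoOn.sub_mul_sub_pos (hr : StrictMonoOn r s) (hx : x ∈ s) (hy : y ∈ s)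
    (hxy : x ≠ y) : 0 < (x - y) * (r x - r y) := by
  rcases hxy.lt_or_gt with h | h
  · exact mul_pos_of_neg_of_neg (sub_neg.2 h) (sub_neg.2 (hr hx hy h))
  · exact mul_pos (sub_pos.2 h) (sub_pos.2 (hr hy hx h))

end

noncomputable def weightRatio (m₁ m₂ x : ℝ) : ℝ := √(1 - m₁ * x) / √(1 - m₂ * x)

section
variable {m₁ m₂ : ℝ}

lemma strictMonoOn_weightRatio (h₁₂ : m₁ < m₂) (h₂ : m₂ < 1) :
    StrictMonoOn (weightRatio m₁ m₂) (Icc 0 1) := by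
  intro x hx y hy hxy
  have h₁ : m₁ < 1 := h₁₂.trans h₂
  have p₁ := one_sub_mul_pos h₁ hx.1 hx.2
  have p₂ := one_sub_mul_pos h₂ hx.1 hx.2
  have p₃ := one_sub_mul_pos h₁ hy.1 hy.2
  have p₄ := one_sub_mul_pos h₂ hy.1 hy.2
  rw [weightRatio, weightRatio, div_lt_div_iff₀ (sqrt_pos.2 p₂) (sqrt_pos.2 p₄),
    ← sqrt_mul p₁.le, ← sqrt_mul p₃.le]
  exact sqrt_lt_sqrt (by positivity) (by nlinarith)

lemma continuous_weightRatio_sin_sq (h₂ : m₂ < 1) :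
    Continuous fun θ => weightRatio m₁ m₂ (sin θ ^ 2) :=
  continuous_div_sqrt_one_sub_mul_sin_sq h₂ (w := fun θ => √(1 - m₁ * sin θ ^ 2)) (by fun_prop)

lemma weightRatio_sin_sq_div_sqrt (h₁ : m₁ < 1) (θ : ℝ) :
    weightRatio m₁ m₂ (sin θ ^ 2) / √(1 - m₁ * sin θ ^ 2) = 1 / √(1 - m₂ * sin θ ^ 2) := by
  rw [weightRatio, div_div_cancel_left' (sqrt_pos.2 (one_sub_mul_sin_sq_pos h₁ θ)).ne', one_div]

/-- The integrand is nonnegative because `weightRatio m₁ m₂` is increasing; for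
`μ = D(m₁) / K(m₁)` the integral reduces to `D(m₂) - μ K(m₂)` (`chebyshevIntegral_eq`). -/
noncomputable def chebyshevIntegral (m₁ m₂ μ : ℝ) : ℝ :=
  ∫ θ in (0:ℝ)..(π / 2), (sin θ ^ 2 - μ) * (weightRatio m₁ m₂ (sin θ ^ 2) - weightRatio m₁ m₂ μ) /
    √(1 - m₁ * sin θ ^ 2)

lemma chebyshevIntegral_pos (h₁₂ : m₁ < m₂) (h₂ : m₂ < 1) {μ : ℝ} (hμ : μ ∈ Ioc 0 1) :
    0 < chebyshevIntegral m₁ m₂ μ := by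
  have h₁ : m₁ < 1 := h₁₂.trans h₂
  have hr := strictMonoOn_weightRatio h₁₂ h₂
  have hs : ∀ θ, sin θ ^ 2 ∈ Icc (0:ℝ) 1 := fun θ => ⟨sq_nonneg _, sin_sq_le_one θ⟩
  have hcont : Continuous fun θ =>
      (sin θ ^ 2 - μ) * (weightRatio m₁ m₂ (sin θ ^ 2) - weightRatio m₁ m₂ μ) :=
    ((continuous_sin.pow 2).sub continuous_const).mul
      ((continuous_weightRatio_sin_sq h₂).sub continuous_const)
  refine integral_pos (by positivity) (continuous_div_sqrt_one_sub_mul_sin_sq h₁ hcont).continuousOn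
    (fun θ _ => ?_) ⟨0, ⟨le_rfl, by positivity⟩, ?_⟩
  · exact div_nonneg (hr.monotoneOn.sub_mul_sub_nonneg (hs θ) (Ioc_subset_Icc_self hμ))
      (sqrt_nonneg _)
  · refine div_pos (hr.sub_mul_sub_pos (hs 0) (Ioc_subset_Icc_self hμ) ?_)
      (sqrt_pos.2 (one_sub_mul_sin_sq_pos h₁ 0))
    simpa using hμ.1.ne

lemma chebyshevIntegral_eq (h₁ : m₁ < 1) (h₂ : m₂ < 1) (μ : ℝ) :
    chebyshevIntegral m₁ m₂ μ =
      ellD m₂ - μ * ellK m₂ - weightRatio m₁ m₂ μ * (ellD m₁ - μ * ellK m₁) := by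
  rw [← integral_sub_div_sqrt h₁, ← integral_sub_div_sqrt h₂, ← intervalIntegral.integral_const_mul,
    ← integral_sub (intervalIntegrable_div_sqrt_one_sub_mul_sin_sq h₂ (by fun_prop) _ _)
    ((intervalIntegrable_div_sqrt_one_sub_mul_sin_sq h₁ (by fun_prop) _ _).const_mul _),
    chebyshevIntegral]
  congr 1 with θ
  rw [mul_sub, sub_div, mul_div_assoc, weightRatio_sin_sq_div_sqrt h₁]
  ring

end

lemma ellD_div_ellK_strictMonoOn : StrictMonoOn (fun m => ellD m / ellK m) (Iio 1) := by
  intro m₁ (h₁ : m₁ < 1) m₂ (h₂ : m₂ < 1) h₁₂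
  have hK₁ := ellK_pos h₁
  have hμ : ellD m₁ / ellK m₁ ∈ Ioc 0 1 := by
    refine ⟨div_pos (ellD_pos h₁) hK₁, (div_le_one hK₁).2 ?_⟩
    linarith [ellK_eq_ellD_add_ellB h₁, ellB_pos h₁]
  have hpos := chebyshevIntegral_pos h₁₂ h₂ hμ
  rw [chebyshevIntegral_eq h₁ h₂, div_mul_cancel₀ _ hK₁.ne', sub_self, mul_zero, sub_zero] at hpos
  exact (lt_div_iff₀ (ellK_pos h₂)).2 (by linarith)

lemma integral_one_div_add_pi_div_two_sub {δ : ℝ} (hδ : 0 < δ) :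
    ∫ θ in (0:ℝ)..(π / 2), 1 / (δ + (π / 2 - θ)) = log (1 + π / 2 / δ) := by
  rw [integral_comp_sub_left (fun t => 1 / (δ + t)), integral_comp_add_left (fun t => 1 / t),
    integral_one_div]
  · congr 1; field_simp; ring
  · rw [sub_self, add_zero, sub_zero, uIcc_of_le (by linarith [pi_pos])]
    exact fun h => hδ.not_ge h.1

lemma cos_le_pi_div_two_sub {θ : ℝ} (hθ : θ ≤ π / 2) : cos θ ≤ π / 2 - θ := by
  rw [← sin_pi_div_two_sub]
  exact sin_le (by linarith)

lemma log_one_add_le_ellK {m : ℝ} (hm : m < 1) :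
    log (1 + π / 2 / √(1 - m)) ≤ ellK m := by
  have hδ : 0 < √(1 - m) := sqrt_pos.2 (by linarith)
  rw [← integral_one_div_add_pi_div_two_sub hδ, ellK]
  refine integral_mono_on (by positivity) (ContinuousOn.intervalIntegrable ?_)
    (intervalIntegrable_div_sqrt_one_sub_mul_sin_sq hm continuous_const _ _) fun θ hθ => ?_
  · exact continuousOn_const.div (by fun_prop) fun θ hθ => by
      rw [uIcc_of_le (by positivity)] at hθ; linarith [hθ.2]
  have hcos₀ : 0 ≤ cos θ := cos_nonneg_of_mem_Icc ⟨by linarith [hθ.1, pi_pos], hθ.2⟩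
  have hcos := cos_le_pi_div_two_sub hθ.2
  have hsq : √(1 - m * sin θ ^ 2) ≤ √(1 - m) + (π / 2 - θ) := by
    rw [sqrt_le_left (by linarith)]
    nlinarith [sq_sqrt (show 0 ≤ 1 - m by linarith), sin_sq_add_cos_sq θ,
      mul_le_mul hcos hcos hcos₀ (by linarith), mul_nonneg hδ.le hcos₀]
  exact one_div_le_one_div_of_le (sqrt_pos.2 (one_sub_mul_sin_sq_pos hm θ)) hsq

lemma tendsto_ellK_one : Tendsto ellK (𝓝[<] 1) atTop := by
  have hδ : Tendsto (fun m => √(1 - m)) (𝓝[<] 1) (𝓝[>] 0) := by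
    refine tendsto_nhdsWithin_iff.2 ⟨?_, ?_⟩
    · have : ContinuousAt (fun m : ℝ => √(1 - m)) 1 := by fun_prop
      simpa using this.tendsto.mono_left nhdsWithin_le_nhds
    · filter_upwards [self_mem_nhdsWithin] with m (hm : m < 1)
      exact sqrt_pos.2 (by linarith)
  have hlog : Tendsto (fun m => log (1 + π / 2 / √(1 - m))) (𝓝[<] 1) atTop := by
    simpa only [div_eq_mul_inv, Function.comp_def] using
      tendsto_log_atTop.comp (tendsto_atTop_add_const_left _ 1
      ((tendsto_inv_nhdsGT_zero.comp hδ).const_mul_atTop (by positivity)))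
  refine tendsto_atTop_mono' _ ?_ hlog
  filter_upwards [self_mem_nhdsWithin] with m (hm : m < 1)
  exact log_one_add_le_ellK hm

noncomputable def ellF (m : ℝ) : ℝ := 2 * ellE m / (m * ellK m) + 1 - 2 / m

section
variable {m : ℝ}

lemma ellF_eq_one_sub (hm₀ : m ≠ 0) (hm : m < 1) : ellF m = 1 - 2 * (ellD m / ellK m) := by
  have hK := (ellK_pos hm).ne'
  rw [ellF, ellE_eq_ellK_sub_mul_ellD hm]
  field_simp
  ring

lemma ellF_eq_neg_one_add (hm₀ : m ≠ 0) (hm : m < 1) : ellF m = -1 + 2 * (ellB m / ellK m) := by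
  have hK := (ellK_pos hm).ne'
  rw [ellF_eq_one_sub hm₀ hm, eq_sub_of_add_eq' (ellK_eq_ellD_add_ellB hm).symm]
  field_simp
  ring

lemma ellF_strictAntiOn : StrictAntiOn ellF (Ioo 0 1) := fun a ha b hb hab => by
  rw [ellF_eq_one_sub ha.1.ne' ha.2, ellF_eq_one_sub hb.1.ne' hb.2]
  linarith [ellD_div_ellK_strictMonoOn ha.2 hb.2 hab]

lemma ellF_neg (hm : m ∈ Ioo 0 1) : ellF m < 0 := by
  have h : ellD 0 / ellK 0 < ellD m / ellK m :=
    ellD_div_ellK_strictMonoOn (show (0:ℝ) < 1 by norm_num) hm.2 hm.1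
  rw [ellD_div_ellK_zero] at h
  rw [ellF_eq_one_sub hm.1.ne' hm.2]
  linarith

lemma neg_one_lt_ellF (hm : m ∈ Ioo 0 1) : -1 < ellF m := by
  rw [ellF_eq_neg_one_add hm.1.ne' hm.2]
  linarith [div_pos (ellB_pos hm.2) (ellK_pos hm.2)]

end

lemma continuousOn_ellD_div_ellK : ContinuousOn (fun m => ellD m / ellK m) (Iio 1) :=
  (continuousOn_integral_div_sqrt_one_sub_mul_sin_sq (by fun_prop) _ _).div
    (continuousOn_integral_div_sqrt_one_sub_mul_sin_sq continuous_const _ _)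
    fun _ hm => (ellK_pos hm).ne'

lemma tendsto_ellF_zero : Tendsto ellF (𝓝[>] 0) (𝓝 0) := by
  have hcont : ContinuousAt (fun m => 1 - 2 * (ellD m / ellK m)) 0 :=
    (continuousAt_const.sub (continuousAt_const.mul
      (continuousOn_ellD_div_ellK.continuousAt (Iio_mem_nhds (by norm_num)))))
  have hzero : 1 - 2 * (ellD 0 / ellK 0) = 0 := by norm_num [ellD_div_ellK_zero]
  have hF : ellF =ᶠ[𝓝[>] 0] fun m => 1 - 2 * (ellD m / ellK m) := by
    filter_upwards [Ioo_mem_nhdsGT (show (0:ℝ) < 1 by norm_num)] with m hm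
    exact ellF_eq_one_sub hm.1.ne' hm.2
  rw [tendsto_congr' hF]
  simpa only [hzero] using hcont.tendsto.mono_left nhdsWithin_le_nhds

lemma tendsto_ellF_one : Tendsto ellF (𝓝[<] 1) (𝓝 (-1)) := by
  have hBK : Tendsto (fun m => ellB m / ellK m) (𝓝[<] 1) (𝓝 0) := by
    refine tendsto_of_tendsto_of_tendsto_of_le_of_le' tendsto_const_nhds
      (tendsto_inv_atTop_zero.comp tendsto_ellK_one) ?_ ?_ <;>
      filter_upwards [self_mem_nhdsWithin] with m (hm : m < 1)
    · exact (div_pos (ellB_pos hm) (ellK_pos hm)).le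
    · exact (div_le_div_of_nonneg_right (ellB_le_one hm) (ellK_pos hm).le).trans_eq (one_div _)
  have hF : ellF =ᶠ[𝓝[<] 1] fun m => -1 + 2 * (ellB m / ellK m) := by
    filter_upwards [Ioo_mem_nhdsLT (show (0:ℝ) < 1 by norm_num)] with m hm
    exact ellF_eq_neg_one_add hm.1.ne' hm.2
  rw [tendsto_congr' hF]
  simpa using (hBK.const_mul 2).const_add (-1)

lemma ellF_surjOn : SurjOn ellF (Ioo 0 1) (Ioo (-1) 0) := by
  intro y hy
  obtain ⟨b, hby, hb⟩ := ((tendsto_ellF_one.eventually (gt_mem_nhds hy.1)).and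
    (Ioo_mem_nhdsLT (show (0:ℝ) < 1 by norm_num))).exists
  have hg : ContinuousOn (fun m => 1 - 2 * (ellD m / ellK m)) (Icc 0 b) :=
    (continuousOn_const.sub (continuousOn_const.mul continuousOn_ellD_div_ellK)).mono
      fun x hx => hx.2.trans_lt hb.2
  have hy' : y ∈ Ioo (1 - 2 * (ellD b / ellK b)) (1 - 2 * (ellD 0 / ellK 0)) := by
    rw [ellD_div_ellK_zero, ← ellF_eq_one_sub hb.1.ne' hb.2]
    exact ⟨hby, by linarith [hy.2]⟩
  obtain ⟨x, hx, rfl⟩ := intermediate_value_Ioo' hb.1.le hg hy'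
  exact ⟨x, ⟨hx.1, hx.2.trans hb.2⟩, ellF_eq_one_sub hx.1.ne' (hx.2.trans hb.2)⟩

theorem f_strictAnti_bij :
    StrictAntiOn (fun m => 2 * ellE m / (m * ellK m) + 1 - 2 / m)
      (Set.Ioo (0:ℝ) 1) ∧
    Set.BijOn (fun m => 2 * ellE m / (m * ellK m) + 1 - 2 / m)
      (Set.Ioo (0:ℝ) 1) (Set.Ioo (-1 : ℝ) 0) ∧
    Tendsto (fun m => 2 * ellE m / (m * ellK m) + 1 - 2 / m)
      (nhdsWithin 0 (Set.Ioi 0)) (nhds 0) ∧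
    Tendsto (fun m => 2 * ellE m / (m * ellK m) + 1 - 2 / m)
      (nhdsWithin 1 (Set.Iio 1)) (nhds (-1)) :=
  ⟨ellF_strictAntiOn, ⟨fun _ hm => ⟨neg_one_lt_ellF hm, ellF_neg hm⟩, ellF_strictAntiOn.injOn,
    ellF_surjOn⟩, tendsto_ellF_zero, tendsto_ellF_one⟩
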